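/- If d[X;Y] = 0 for G-valued random variables X, Y, then there exists a finite subgroup H of G and elements s, t in G such that X is distributed as s + U_H and Y is distributed as t + U_H, where U_H is uniform on H. -/

import Mathlib

open scoped BigOperators Pointwise
noncomputable section

/-- A finitely supported probability mass function. -/
def IsPMF {α : Type*} (p : α → ℝ) : Prop :=
  (∀ x, 0 ≤ p x) ∧ (Function.support p).Finite ∧ ∑ᶠ x, p x = 1

/-- Shannon entropy of a pmf. -/
def ent {α : Type*} (p : α → ℝ) : ℝ := ∑ᶠ x, -(p x * Real.log (p x))

/-- Convolution of pmfs: the distribution of the sum of independent random variables. -/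
def conv {G : Type*} [AddCommGroup G] (p q : G → ℝ) : G → ℝ :=
  fun z => ∑ᶠ x, p x * q (z - x)

/-- Distribution of the negation. -/
def negp {G : Type*} [AddCommGroup G] (p : G → ℝ) : G → ℝ := fun x => p (-x)

/-- Entropic Ruzsa distance between (the distributions of) two random variables. -/
def rdist {G : Type*} [AddCommGroup G] (p q : G → ℝ) : ℝ :=
  ent (conv p (negp q)) - ent p / 2 - ent q / 2

/-- Distribution of the sum of `n` iid copies. -/
def iterConv {G : Type*} [AddCommGroup G] (p : G → ℝ) : ℕ → G → ℝ
  | 0 => fun x => Set.indicator ({0} : Set G) (fun _ => (1 : ℝ)) x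
  | n + 1 => conv (iterConv p n) p

/-! The law of `X - Y`, `conv p (negp q)`, is the mixture `∑ y, q y • p (· + y)` of translates
of `p`. By strict concavity of `x ↦ -x log x`, its entropy is at least `H(X)`, with equality only
if all translates `p (· + y)` with `q y ≠ 0` coincide, i.e. differences of points of the support
of `q` are periods of `p`; symmetrically for `H(Y)`. As `d[X;Y] = 0` makes `H(X - Y)` the mean of
`H(X)` and `H(Y)`, both equalities hold. Each period group then contains the differences of the
other support, which forces the two period groups to coincide, and a pmf whose support is a single
coset of its period group `H` is uniform on that coset, with `H` finite because the support is. -/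

open Function Real

section Entropy

variable {ι β γ : Type*}

lemma IsPMF.exists_ne_zero {p : β → ℝ} (hp : IsPMF p) : ∃ x, p x ≠ 0 := by
  by_contra! h
  simpa [h] using hp.2.2

lemma IsPMF.sum_toFinset {p : β → ℝ} (hp : IsPMF p) : ∑ x ∈ hp.2.1.toFinset, p x = 1 := by
  rw [← finsum_eq_sum_of_support_subset p (by simp)]
  exact hp.2.2

lemma ent_eq_sum_negMulLog {p : β → ℝ} {Z : Finset β} (hZ : support p ⊆ Z) :
    ent p = ∑ z ∈ Z, negMulLog (p z) := by
  have hsupp : support (fun x => negMulLog (p x)) ⊆ Z :=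
    (support_comp_subset negMulLog_zero p).trans hZ
  rw [ent, ← finsum_eq_sum_of_support_subset _ hsupp]
  simp only [negMulLog, neg_mul]

lemma ent_comp_equiv (p : β → ℝ) (e : γ ≃ β) : ent (fun x => p (e x)) = ent p :=
  finsum_comp_equiv (f := fun x => -(p x * log (p x))) e

variable {T : Finset ι} {w : ι → ℝ} {f : ι → β → ℝ}

lemma exists_finset_forall_support_subset (hf : ∀ i ∈ T, (support (f i)).Finite) :
    ∃ Z : Finset β, ∀ i ∈ T, support (f i) ⊆ Z :=
  ⟨(T.finite_toSet.biUnion hf).toFinset, fun i hi => by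
    simpa using Set.subset_biUnion_of_mem (u := fun i => support (f i)) (Finset.mem_coe.2 hi)⟩

lemma sum_mul_ent_eq_sum_sum {Z : Finset β} (hZ : ∀ i ∈ T, support (f i) ⊆ Z) :
    ∑ i ∈ T, w i * ent (f i) = ∑ z ∈ Z, ∑ i ∈ T, w i * negMulLog (f i z) := by
  rw [Finset.sum_comm]
  refine Finset.sum_congr rfl fun i hi => ?_
  rw [ent_eq_sum_negMulLog (hZ i hi), Finset.mul_sum]

lemma ent_sum_smul_eq_sum {Z : Finset β} (hZ : ∀ i ∈ T, support (f i) ⊆ Z) :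
    ent (∑ i ∈ T, w i • f i) = ∑ z ∈ Z, negMulLog (∑ i ∈ T, w i * f i z) := by
  have hsupp : support (∑ i ∈ T, w i • f i) ⊆ Z := by
    intro z hz
    by_contra hzZ
    apply hz
    rw [Finset.sum_apply]
    exact Finset.sum_eq_zero fun i hi => by simp [notMem_support.1 fun h => hzZ (hZ i hi h)]
  simp [ent_eq_sum_negMulLog hsupp, Finset.sum_apply]

lemma sum_mul_negMulLog_le (hw0 : ∀ i ∈ T, 0 ≤ w i) (hw1 : ∑ i ∈ T, w i = 1) {x : ι → ℝ}
    (hx : ∀ i ∈ T, 0 ≤ x i) :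
    ∑ i ∈ T, w i * negMulLog (x i) ≤ negMulLog (∑ i ∈ T, w i * x i) :=
  concaveOn_negMulLog.le_map_sum hw0 hw1 hx

theorem sum_mul_ent_le_ent_sum_smul (hw0 : ∀ i ∈ T, 0 ≤ w i) (hw1 : ∑ i ∈ T, w i = 1)
    (hf0 : ∀ i ∈ T, 0 ≤ f i) (hf : ∀ i ∈ T, (support (f i)).Finite) :
    ∑ i ∈ T, w i * ent (f i) ≤ ent (∑ i ∈ T, w i • f i) := by
  obtain ⟨Z, hZ⟩ := exists_finset_forall_support_subset hf
  rw [sum_mul_ent_eq_sum_sum hZ, ent_sum_smul_eq_sum hZ]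
  exact Finset.sum_le_sum fun z _ => sum_mul_negMulLog_le hw0 hw1 fun i hi => hf0 i hi z

theorem eq_of_ent_sum_smul_eq (hw0 : ∀ i ∈ T, 0 < w i) (hw1 : ∑ i ∈ T, w i = 1)
    (hf0 : ∀ i ∈ T, 0 ≤ f i) (hf : ∀ i ∈ T, (support (f i)).Finite)
    (h : ent (∑ i ∈ T, w i • f i) = ∑ i ∈ T, w i * ent (f i)) {i j : ι} (hi : i ∈ T)
    (hj : j ∈ T) : f i = f j := by
  obtain ⟨Z, hZ⟩ := exists_finset_forall_support_subset hf
  rw [sum_mul_ent_eq_sum_sum hZ, ent_sum_smul_eq_sum hZ] at h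
  have hjensen : ∀ z ∈ Z, ∑ i ∈ T, w i * negMulLog (f i z) ≤ negMulLog (∑ i ∈ T, w i * f i z) :=
    fun z _ => sum_mul_negMulLog_le (fun i hi => (hw0 i hi).le) hw1 fun i hi => hf0 i hi z
  have hpointwise := (Finset.sum_eq_sum_iff_of_le hjensen).1 h.symm
  funext z
  by_cases hz : z ∈ Z
  · exact (strictConcaveOn_negMulLog.map_sum_eq_iff_of_pos hw0 hw1
      fun k hk => hf0 k hk z).1 (hpointwise z hz).symm hi hj
  · rw [notMem_support.1 fun hzi => hz (hZ i hi hzi), notMem_support.1 fun hzj => hz (hZ j hj hzj)]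

end Entropy

section RuzsaDistance

variable {G : Type*} [AddCommGroup G] {p q : G → ℝ}

def periods (p : G → ℝ) : AddSubgroup G where
  carrier := {d | Periodic p d}
  zero_mem' := fun x => by rw [add_zero]
  add_mem' := Periodic.add_period
  neg_mem' := Periodic.neg

lemma conv_negp_eq_sum_smul {T : Finset G} (hT : support q ⊆ T) :
    conv p (negp q) = ∑ y ∈ T, q y • fun z => p (z + y) := by
  funext z
  rw [conv, ← finsum_comp_equiv (Equiv.addLeft z)]
  simp only [negp, Equiv.coe_addLeft, sub_add_cancel_left, neg_neg, Finset.sum_apply,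
    Pi.smul_apply, smul_eq_mul]
  rw [finsum_eq_sum_of_support_subset _ ((support_mul_subset_right _ _).trans hT)]
  exact Finset.sum_congr rfl fun y _ => mul_comm _ _

lemma conv_negp_swap (p q : G → ℝ) (z : G) : conv q (negp p) z = conv p (negp q) (-z) := by
  rw [conv, ← finsum_comp_equiv (Equiv.addLeft z)]
  simp only [conv, negp, Equiv.coe_addLeft, sub_add_cancel_left, neg_neg, neg_sub, sub_neg_eq_add]
  exact finsum_congr fun x => by rw [mul_comm, add_comm]

lemma ent_conv_negp_comm (p q : G → ℝ) : ent (conv q (negp p)) = ent (conv p (negp q)) := by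
  rw [show conv q (negp p) = fun z => conv p (negp q) (-z) from funext (conv_negp_swap p q)]
  exact ent_comp_equiv _ (Equiv.neg G)

lemma ent_add_right (p : G → ℝ) (y : G) : ent (fun z => p (z + y)) = ent p :=
  ent_comp_equiv p (Equiv.addRight y)

lemma IsPMF.finite_support_add_right (hp : IsPMF p) (y : G) :
    (support fun z => p (z + y)).Finite :=
  hp.2.1.preimage (add_left_injective y).injOn

lemma IsPMF.sum_mul_ent_add_right (hq : IsPMF q) (p : G → ℝ) :
    ∑ y ∈ hq.2.1.toFinset, q y * ent (fun z => p (z + y)) = ent p := by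
  simp_rw [ent_add_right, ← Finset.sum_mul, hq.sum_toFinset, one_mul]

lemma ent_le_ent_conv_negp (hp : IsPMF p) (hq : IsPMF q) : ent p ≤ ent (conv p (negp q)) := by
  have hmix := sum_mul_ent_le_ent_sum_smul (fun y _ => hq.1 y) hq.sum_toFinset
    (fun y _ z => hp.1 (z + y)) fun y _ => hp.finite_support_add_right y
  rwa [hq.sum_mul_ent_add_right, ← conv_negp_eq_sum_smul hq.2.1.coe_toFinset.ge] at hmix

lemma sub_mem_periods_of_ent_conv_negp_eq (hp : IsPMF p) (hq : IsPMF q)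
    (h : ent (conv p (negp q)) = ent p) {y y' : G} (hy : q y ≠ 0) (hy' : q y' ≠ 0) :
    y - y' ∈ periods p := by
  have hpos : ∀ y ∈ hq.2.1.toFinset, 0 < q y := fun y hy =>
    (hq.1 y).lt_of_ne' (by simpa using hy)
  have htranslate : (fun z => p (z + y)) = fun z => p (z + y') :=
    eq_of_ent_sum_smul_eq hpos hq.sum_toFinset (fun y _ z => hp.1 (z + y))
      (fun y _ => hp.finite_support_add_right y)
      (by rw [← conv_negp_eq_sum_smul hq.2.1.coe_toFinset.ge, h, hq.sum_mul_ent_add_right])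
      (by simpa using hy) (by simpa using hy')
  intro x
  have hx := congrFun htranslate (x - y')
  rw [sub_add_cancel] at hx
  rw [← hx, sub_add_eq_add_sub, add_sub_assoc]

lemma periods_le_of_sub_mem {K : AddSubgroup G} {s : G} (hs : p s ≠ 0)
    (hK : ∀ x x', p x ≠ 0 → p x' ≠ 0 → x - x' ∈ K) : periods p ≤ K := by
  intro d hd
  have hsd : p (s + d) ≠ 0 := by rwa [hd s]
  simpa using hK _ _ hsd hs

lemma IsPMF.eq_indicator_vadd {H : AddSubgroup G} {s : G} (hp : IsPMF p) (hs : p s ≠ 0)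
    (hH : H ≤ periods p) (hsupp : ∀ x, p x ≠ 0 → x - s ∈ H) :
    (H : Set G).Finite ∧ p = Set.indicator (s +ᵥ (H : Set G)) (fun _ => (Nat.card H : ℝ)⁻¹) := by
  have hcoset : ∀ h ∈ H, p (s + h) = p s := fun h hh => hH hh s
  have hfin : (H : Set G).Finite :=
    (hp.2.1.image (· - s)).subset fun h hh => ⟨s + h, by simpa [hcoset h hh] using hs, by simp⟩
  have hp_eq : p = Set.indicator (s +ᵥ (H : Set G)) (fun _ => p s) := by
    funext x
    by_cases hx : x ∈ s +ᵥ (H : Set G)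
    · obtain ⟨h, hh, rfl⟩ := hx
      rw [Set.indicator_of_mem (Set.vadd_mem_vadd_set hh)]
      exact hcoset h hh
    · rw [Set.indicator_of_notMem hx]
      by_contra hpx
      exact hx ⟨x - s, hsupp x hpx, by simp⟩
  have hmass : (Nat.card H : ℝ) * p s = 1 := by
    have hsum := hp.2.2
    rwa [hp_eq, ← finsum_mem_def, finsum_mem_eq_finite_toFinset_sum _ hfin.vadd_set,
      Finset.sum_const, nsmul_eq_mul, ← Nat.card_eq_card_finite_toFinset, Set.natCard_vadd_set]
      at hsum
  exact ⟨hfin, hp_eq.trans (by rw [eq_inv_of_mul_eq_one_right hmass])⟩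

end RuzsaDistance

/-- if `d[X;Y] = 0` then `X` and `Y` are translates of the uniform distribution
on a common finite subgroup `H` of `G`. -/
theorem rdist_eq_zero_iff_uniform_on_coset {G : Type*} [AddCommGroup G] (p q : G → ℝ)
    (hp : IsPMF p) (hq : IsPMF q) (h : rdist p q = 0) :
    ∃ (H : AddSubgroup G) (s t : G), (H : Set G).Finite ∧
      p = Set.indicator (s +ᵥ (H : Set G)) (fun _ => (Nat.card H : ℝ)⁻¹) ∧
      q = Set.indicator (t +ᵥ (H : Set G)) (fun _ => (Nat.card H : ℝ)⁻¹) := by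
  have hp_le := ent_le_ent_conv_negp hp hq
  have hq_le := ent_le_ent_conv_negp hq hp
  rw [ent_conv_negp_comm] at hq_le
  have hr : ent (conv p (negp q)) = ent p / 2 + ent q / 2 := by rw [rdist] at h; linarith
  have hpq : ∀ y y', q y ≠ 0 → q y' ≠ 0 → y - y' ∈ periods p := fun _ _ =>
    sub_mem_periods_of_ent_conv_negp_eq hp hq (by linarith)
  have hqp : ∀ x x', p x ≠ 0 → p x' ≠ 0 → x - x' ∈ periods q := fun _ _ =>
    sub_mem_periods_of_ent_conv_negp_eq hq hp (by rw [ent_conv_negp_comm]; linarith)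
  obtain ⟨s, hs⟩ := hp.exists_ne_zero
  obtain ⟨t, ht⟩ := hq.exists_ne_zero
  have hperiods : periods p = periods q :=
    le_antisymm (periods_le_of_sub_mem hs hqp) (periods_le_of_sub_mem ht hpq)
  obtain ⟨hfin, hp_eq⟩ := hp.eq_indicator_vadd hs le_rfl fun x hx => hperiods ▸ hqp x s hx hs
  obtain ⟨-, hq_eq⟩ := hq.eq_indicator_vadd ht hperiods.le fun x hx => hpq x t hx ht
  exact ⟨periods p, s, t, hfin, hp_eq, hq_eq⟩
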